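/- There exist a finite set Λ of directions contained in S² ∩ ℚ³ and a family of smooth real-valued functions (γ_ξ)_{ξ∈Λ}, defined on the set of symmetric 3×3 real matrices R with ‖R − Id‖_F ≤ 1/2, such that every symmetric 3×3 matrix R satisfying ‖R − Id‖_F ≤ 1/2 admits the representation R = Σ_{ξ∈Λ} γ_ξ(R)² (ξ ⊗ ξ). -/

import Mathlib

open MeasureTheory Real
open scoped ENNReal NNReal

noncomputable section

abbrev R3 := Fin 3 → ℝ
abbrev Z3 := Fin 3 → ℤ

def cube : Set R3 := Set.univ.pi fun _ => Set.Icc 0 (2 * π)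

def μT3 : Measure R3 := volume.restrict cube

def Periodic3 {α : Type*} (u : R3 → α) : Prop :=
  ∀ (x : R3) (k : Z3), u (fun i => x i + 2 * π * (k i)) = u x

def dotZ (n : Z3) (x : R3) : ℝ := ∑ i, (n i : ℝ) * x i

def eZ (n : Z3) (x : R3) : ℂ := Complex.exp (Complex.I * (dotZ n x : ℂ))

def fCoeff (u : R3 → ℂ) (n : Z3) : ℂ :=
  (1 / (2 * π) ^ 3 : ℝ) • ∫ y in cube, Complex.exp (-(Complex.I * (dotZ n y : ℂ))) * u y

def normZsq (n : Z3) : ℝ := ∑ i, (n i : ℝ) ^ 2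

def pd {E : Type*} [NormedAddCommGroup E] [NormedSpace ℝ E] (i : Fin 3) (h : R3 → E) :
    R3 → E :=
  fun x => fderiv ℝ h x (Pi.single i 1)

abbrev M3 := Fin 3 → Fin 3 → ℝ

/-- Frobenius norm on 3×3 matrices. -/
def frob (A : M3) : ℝ := Real.sqrt (∑ i, ∑ j, A i j ^ 2)

/-- The identity matrix. -/
def idM : M3 := fun i j => if i = j then 1 else 0

/-- Tensor product `v ⊗ w` of two vectors. -/
def tens (v w : R3) : M3 := fun i j => v i * w j

def symmM (A : M3) : Prop := ∀ i j, A i j = A j i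

/-- The set of symmetric matrices `R` with `‖R - Id‖_F ≤ 1/2`. -/
def geomSet : Set M3 := {R | symmM R ∧ frob (R - idM) ≤ 1 / 2}

/-! For `σ = ±1` the unit vectors `ξ = (3 eₖ + 4σ eₖ₊₁)/5` satisfy
`ξ₊ ⊗ ξ₊ - ξ₋ ⊗ ξ₋ = 24/25 (eₖ ⊗ eₖ₊₁ + eₖ₊₁ ⊗ eₖ)`, so the off-diagonal entry `x = Rₖ,ₖ₊₁` is
produced by the weights `25/24 (s ± x)`, positive as soon as `s > |x|`; taking for `s` the smooth
function `√(1/400 + x²)` keeps them smooth. These pairs also put `3/4 s` and `4/3 s` on the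
diagonal, and what is left of the diagonal of `R`, close to `Id`, is taken by the axes `eₖ` with a
positive weight. All weights are then smooth and positive, hence have smooth square roots. -/

open Finset Function

lemma sum_units_smul_tens_pythagorean (u v : R3) (s x : ℝ) :
    ∑ σ : ℤˣ, (25 / 24 * (s + σ * x)) •
        tens ((3 / 5 : ℝ) • u + ((σ : ℝ) * (4 / 5)) • v)
          ((3 / 5 : ℝ) • u + ((σ : ℝ) * (4 / 5)) • v) =
      (3 / 4 * s) • tens u u + (4 / 3 * s) • tens v v + x • (tens u v + tens v u) := by
  simp only [UnitsInt.univ, mem_singleton, units_ne_neg_self, not_false_eq_true, sum_insert,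
    sum_singleton]
  funext i j
  simp [tens]
  ring

lemma eq_sum_tens_of_symmM {R : M3} (hR : symmM R) :
    R = ∑ k : Fin 3, (R k k • tens (Pi.single k 1) (Pi.single k 1) +
      R k (k + 1) • (tens (Pi.single k 1) (Pi.single (k + 1) 1) +
        tens (Pi.single (k + 1) 1) (Pi.single k 1))) := by
  funext i j
  fin_cases i <;> fin_cases j <;> simp [Fin.sum_univ_three, tens, hR 1 0, hR 2 0, hR 2 1]

def directionQ : Fin 3 ⊕ Fin 3 × ℤˣ → Fin 3 → ℚ
  | .inl k => Pi.single k 1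
  | .inr (k, σ) => (3 / 5 : ℚ) • Pi.single k 1 + ((σ : ℚ) * (4 / 5)) • Pi.single (k + 1) 1

lemma directionQ_injective : Injective directionQ := by decide +kernel

lemma sum_directionQ_sq (a : Fin 3 ⊕ Fin 3 × ℤˣ) : ∑ i, directionQ a i ^ 2 = 1 := by
  revert a; decide +kernel

def direction (a : Fin 3 ⊕ Fin 3 × ℤˣ) : R3 := fun i => (directionQ a i : ℝ)

lemma sum_direction_sq (a : Fin 3 ⊕ Fin 3 × ℤˣ) : ∑ i, direction a i ^ 2 = 1 := by
  simpa [direction] using congrArg ((↑) : ℚ → ℝ) (sum_directionQ_sq a)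

lemma direction_injective : Injective direction := fun _ _ h =>
  directionQ_injective <| funext fun i => Rat.cast_injective (congrFun h i)

lemma direction_inl (k : Fin 3) : direction (.inl k) = Pi.single k 1 := by
  funext i
  simp [direction, directionQ, Pi.single_apply, apply_ite]

lemma direction_inr (k : Fin 3) (σ : ℤˣ) :
    direction (.inr (k, σ)) =
      (3 / 5 : ℝ) • Pi.single k 1 + ((σ : ℝ) * (4 / 5)) • Pi.single (k + 1) 1 := by
  funext i
  simp only [direction, directionQ, Pi.add_apply, Pi.smul_apply, smul_eq_mul, Pi.single_apply]
  split_ifs <;> push_cast <;> ring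

def smoothAbs (x : ℝ) : ℝ := √(1 / 400 + x ^ 2)

def weight : Fin 3 ⊕ Fin 3 × ℤˣ → M3 → ℝ
  | .inl k, R => R k k - 3 / 4 * smoothAbs (R k (k + 1)) - 4 / 3 * smoothAbs (R (k - 1) k)
  | .inr (k, σ), R => 25 / 24 * (smoothAbs (R k (k + 1)) + σ * R k (k + 1))

lemma sum_weight_smul_tens {R : M3} (hR : symmM R) :
    ∑ a, weight a R • tens (direction a) (direction a) = R := by
  have shift : ∑ k : Fin 3, (4 / 3 * smoothAbs (R k (k + 1))) •
        tens (Pi.single (k + 1) 1) (Pi.single (k + 1) 1) =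
      ∑ k : Fin 3, (4 / 3 * smoothAbs (R (k - 1) k)) • tens (Pi.single k 1) (Pi.single k 1) :=
    Fintype.sum_equiv (Equiv.addRight 1) _ _ fun k => by simp
  rw [Fintype.sum_sum_type, Fintype.sum_prod_type]
  simp only [weight, direction_inl, direction_inr, sum_units_smul_tens_pythagorean,
    sum_add_distrib, shift]
  conv_rhs => rw [eq_sum_tens_of_symmM hR]
  simp only [sum_add_distrib, sub_smul, sum_sub_distrib]
  abel

lemma abs_lt_smoothAbs (x : ℝ) : |x| < smoothAbs x := by
  rw [← sqrt_sq_eq_abs, smoothAbs]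
  exact sqrt_lt_sqrt (sq_nonneg x) (by linarith)

lemma smoothAbs_le (x : ℝ) : smoothAbs x ≤ 1 / 20 + |x| := by
  rw [smoothAbs, sqrt_le_left (by positivity), add_sq, sq_abs]
  nlinarith [abs_nonneg x]

@[fun_prop]
lemma contDiff_smoothAbs {n : WithTop ℕ∞} : ContDiff ℝ n smoothAbs :=
  (contDiff_const.add (contDiff_id.pow 2)).sqrt fun x => by positivity

lemma lt_one_add_of_sq_add_sq_add_sq_le {d u v : ℝ} (h : d ^ 2 + 2 * u ^ 2 + 2 * v ^ 2 ≤ 1 / 4) :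
    3 / 4 * smoothAbs u + 4 / 3 * smoothAbs v < 1 + d := by
  have hu := smoothAbs_le u
  have hv := smoothAbs_le v
  have hu' := abs_nonneg u
  have hv' := abs_nonneg v
  rw [← sq_abs u, ← sq_abs v] at h
  -- the hints sit near the maximiser of `3/4 |u| + 4/3 |v| - d` on the ellipsoid
  nlinarith [sq_nonneg (|u| - 1 / 8), sq_nonneg (|v| - 2 / 9), sq_nonneg (d + 1 / 3)]

lemma row_sq_sum_le_of_mem_geomSet {R : M3} (hR : R ∈ geomSet) (k : Fin 3) :
    (R k k - 1) ^ 2 + 2 * R k (k + 1) ^ 2 + 2 * R (k - 1) k ^ 2 ≤ 1 / 4 := by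
  obtain ⟨hsymm, hfrob⟩ := hR
  have h := (sqrt_le_left (by norm_num)).mp hfrob
  simp [Fin.sum_univ_three, idM, hsymm 1 0, hsymm 2 0, hsymm 2 1] at h
  fin_cases k <;>
    simp only [Fin.reduceFinMk, Fin.isValue, Fin.reduceAdd, Fin.reduceSub, hsymm 2 0] <;>
    linarith [sq_nonneg (R 0 0 - 1), sq_nonneg (R 1 1 - 1), sq_nonneg (R 2 2 - 1),
      sq_nonneg (R 0 1), sq_nonneg (R 0 2), sq_nonneg (R 1 2)]

lemma weight_pos {R : M3} (hR : R ∈ geomSet) : ∀ a, 0 < weight a R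
  | .inl k => by
    have := lt_one_add_of_sq_add_sq_add_sq_le (row_sq_sum_le_of_mem_geomSet hR k)
    simp only [weight]
    linarith
  | .inr (k, σ) => by
    have := abs_lt_smoothAbs (R k (k + 1))
    rcases Int.units_eq_one_or σ with rfl | rfl <;> simp only [weight] <;> push_cast <;>
      cases abs_lt.mp this <;> linarith

lemma contDiff_weight {n : WithTop ℕ∞} (a : Fin 3 ⊕ Fin 3 × ℤˣ) : ContDiff ℝ n (weight a) := by
  rcases a with k | ⟨k, σ⟩ <;> unfold weight <;> fun_prop

theorem geometric_lemma :
    ∃ (Λ : Finset R3) (γ : R3 → M3 → ℝ),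
      (∀ ξ ∈ Λ, (∑ i, ξ i ^ 2) = 1 ∧ ∀ i, ∃ q : ℚ, ξ i = (q : ℝ)) ∧
      (∀ ξ ∈ Λ, ContDiffOn ℝ (⊤ : ℕ∞) (γ ξ) geomSet) ∧
      (∀ R ∈ geomSet, R = ∑ ξ ∈ Λ, (γ ξ R) ^ 2 • tens ξ ξ) := by
  have hinv : ∀ a, invFun direction (direction a) = a := leftInverse_invFun direction_injective
  refine ⟨univ.image direction, fun ξ R => √(weight (invFun direction ξ) R), ?_, ?_, ?_⟩
  · simp only [mem_image, mem_univ, true_and, forall_exists_index, forall_apply_eq_imp_iff]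
    intro a
    exact ⟨sum_direction_sq a, fun i => ⟨_, rfl⟩⟩
  · simp only [mem_image, mem_univ, true_and, forall_exists_index, forall_apply_eq_imp_iff, hinv]
    intro a
    exact (contDiff_weight a).contDiffOn.sqrt fun R hR => (weight_pos hR a).ne'
  · intro R hR
    rw [sum_image fun a _ b _ h => direction_injective h]
    simp only [hinv, sq_sqrt (weight_pos hR _).le]
    exact (sum_weight_smul_tens hR.1).symm
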